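/- The bracket of 𝔤₂ᶜ is well-defined, i.e. its first component is always a traceless anti-Hermitian 3×3 complex matrix, and it satisfies the Jacobi identity. Hence it makes su(3) × ℂ³ into a 14-dimensional real Lie algebra (the compact real form of the exceptional Lie algebra 𝔤₂). -/

import Mathlib

/-
Both claims are bilinear identities. For closure: the commutator of skew-Hermitian matrices is
skew-Hermitian and traceless, `3(v₂v₁* − v₁v₂*)` is skew-Hermitian with trace `3(v₁*v₂ − v₂*v₁)`,
and the scalar term, a purely imaginary multiple of `I₃`, removes exactly that trace.

The Jacobiator is additive in each argument and invariant under cyclic permutations, so writing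
each element as `(A, 0) + (0, v)` reduces the Jacobi identity to four kinds of triples:
three matrices (associativity); two matrices and a vector (`ℂ³` is a module over the matrix
commutator); one matrix and two vectors, where a traceless skew-Hermitian `A` acts as a derivation
of the bracket of two vectors, which comes down to `(Ma) × b + a × (Mb) + Mᵀ(a × b) = tr M · (a × b)`;
and three vectors, where the vector part is the rule `(a × b) × c = (a·c) b − (b·c) a` and the
matrix part is `∑_cyc z (x × y)ᵀ = det(x, y, z) · I`.
-/

open Matrix

/-- The ℂ-bilinear extension of the cross product to `ℂ³`. -/
def crossC (x y : Fin 3 → ℂ) : Fin 3 → ℂ :=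
  ![x 1 * y 2 - x 2 * y 1, x 2 * y 0 - x 0 * y 2, x 0 * y 1 - x 1 * y 0]

/-- The bracket of `𝔤₂ᶜ` on `su(3) × ℂ³` (written on all of `Matrix(3,3,ℂ) × ℂ³`):
`[(A₁,v₁),(A₂,v₂)] = (A₁A₂ − A₂A₁ + 3(v₂v₁* − v₁v₂*) − (v₁*v₂ − v₂*v₁)·I₃,
A₁v₂ − A₂v₁ + 2·(conj v₁) × (conj v₂))`. -/
noncomputable def g2cBracket (u v : Matrix (Fin 3) (Fin 3) ℂ × (Fin 3 → ℂ)) :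
    Matrix (Fin 3) (Fin 3) ℂ × (Fin 3 → ℂ) :=
  ( u.1 * v.1 - v.1 * u.1
      + (3 : ℂ) • (vecMulVec v.2 (star u.2) - vecMulVec u.2 (star v.2))
      - ((star u.2 ⬝ᵥ v.2) - (star v.2 ⬝ᵥ u.2)) • (1 : Matrix (Fin 3) (Fin 3) ℂ),
    u.1.mulVec v.2 - v.1.mulVec u.2 + (2 : ℂ) • crossC (star u.2) (star v.2) )

theorem star_crossProduct {R : Type*} [CommRing R] [StarRing R] (x y : Fin 3 → R) :
    star (x ⨯₃ y) = star x ⨯₃ star y := by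
  ext i
  fin_cases i <;> simp [cross_apply, mul_comm]

theorem cross_dotProduct {R : Type*} [CommRing R] (x y z : Fin 3 → R) :
    x ⨯₃ y ⬝ᵥ z = x ⬝ᵥ y ⨯₃ z := by
  rw [dotProduct_comm, triple_product_permutation]

theorem mulVec_cross_add_cross_mulVec {R : Type*} [CommRing R] (M : Matrix (Fin 3) (Fin 3) R)
    (a b : Fin 3 → R) :
    (M *ᵥ a) ⨯₃ b + a ⨯₃ (M *ᵥ b) + Mᵀ *ᵥ (a ⨯₃ b) = M.trace • (a ⨯₃ b) := by
  ext i
  fin_cases i <;> simp [cross_apply, mulVec, dotProduct, Fin.sum_univ_three, trace] <;> ring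

theorem cross_vecMulVec_cyclic_sum {R : Type*} [CommRing R] (x y z : Fin 3 → R) :
    vecMulVec (y ⨯₃ z) x + vecMulVec (z ⨯₃ x) y + vecMulVec (x ⨯₃ y) z = (x ⬝ᵥ y ⨯₃ z) • 1 := by
  ext i j
  fin_cases i <;> fin_cases j <;>
    simp [cross_apply, vecMulVec_apply, dotProduct, Fin.sum_univ_three, one_apply,
      -cons_vecMulVec, -vecMulVec_cons] <;> ring

theorem vecMulVec_cross_cyclic_sum {R : Type*} [CommRing R] (x y z : Fin 3 → R) :
    vecMulVec x (y ⨯₃ z) + vecMulVec y (z ⨯₃ x) + vecMulVec z (x ⨯₃ y) = (x ⬝ᵥ y ⨯₃ z) • 1 := by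
  simpa only [transpose_add, transpose_vecMulVec, transpose_smul, transpose_one] using
    congrArg transpose (cross_vecMulVec_cyclic_sum x y z)

theorem star_mulVec_of_conjTranspose_eq_neg {n α : Type*} [Fintype n] [Ring α] [StarRing α]
    {A : Matrix n n α} (hA : Aᴴ = -A) (x : n → α) : star (A *ᵥ x) = -(star x ᵥ* A) := by
  rw [star_mulVec, hA, vecMul_neg]

theorem mulVec_star_cross_star {R : Type*} [CommRing R] [StarRing R]
    {A : Matrix (Fin 3) (Fin 3) R} (hA : Aᴴ = -A) (hA₀ : A.trace = 0) (x y : Fin 3 → R) :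
    A *ᵥ (star x ⨯₃ star y) = star (A *ᵥ x) ⨯₃ star y + star x ⨯₃ star (A *ᵥ y) := by
  have h := mulVec_cross_add_cross_mulVec Aᵀ (star x) (star y)
  rw [trace_transpose, hA₀, zero_smul, transpose_transpose] at h
  rw [star_mulVec_of_conjTranspose_eq_neg hA, star_mulVec_of_conjTranspose_eq_neg hA,
    ← mulVec_transpose, ← mulVec_transpose, map_neg, LinearMap.neg_apply, map_neg]
  linear_combination (norm := module) h

local notation "𝔤" => Matrix (Fin 3) (Fin 3) ℂ × (Fin 3 → ℂ)

theorem crossC_eq_crossProduct (x y : Fin 3 → ℂ) : crossC x y = x ⨯₃ y := rfl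

theorem g2cBracket_add_left (u u' v : 𝔤) :
    g2cBracket (u + u') v = g2cBracket u v + g2cBracket u' v := by
  simp only [g2cBracket, crossC_eq_crossProduct, Prod.fst_add, Prod.snd_add, star_add, add_mul,
    mul_add, vecMulVec_add, add_vecMulVec, add_dotProduct, dotProduct_add, add_mulVec,
    mulVec_add, map_add, LinearMap.add_apply, Prod.mk_add_mk]
  congr 1 <;> module

theorem g2cBracket_add_right (u v v' : 𝔤) :
    g2cBracket u (v + v') = g2cBracket u v + g2cBracket u v' := by
  simp only [g2cBracket, crossC_eq_crossProduct, Prod.fst_add, Prod.snd_add, star_add, add_mul,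
    mul_add, vecMulVec_add, add_vecMulVec, add_dotProduct, dotProduct_add, add_mulVec,
    mulVec_add, map_add, Prod.mk_add_mk]
  congr 1 <;> module

theorem g2cBracket_neg_left (u v : 𝔤) : g2cBracket (-u) v = -g2cBracket u v := by
  refine eq_neg_of_add_eq_zero_left ?_
  rw [← g2cBracket_add_left, neg_add_cancel]
  simp [g2cBracket, crossC_eq_crossProduct]

theorem g2cBracket_swap (u v : 𝔤) : g2cBracket v u = -g2cBracket u v := by
  simp only [g2cBracket, crossC_eq_crossProduct]
  rw [← cross_anticomm, Prod.neg_mk]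
  congr 1 <;> module

theorem g2cBracket_mat_mat (A B : Matrix (Fin 3) (Fin 3) ℂ) :
    g2cBracket (A, 0) (B, 0) = (A * B - B * A, 0) := by
  simp [g2cBracket, crossC_eq_crossProduct]

theorem g2cBracket_mat_vec (A : Matrix (Fin 3) (Fin 3) ℂ) (x : Fin 3 → ℂ) :
    g2cBracket (A, 0) (0, x) = (0, A *ᵥ x) := by
  simp [g2cBracket, crossC_eq_crossProduct]

theorem g2cBracket_vec_mat (A : Matrix (Fin 3) (Fin 3) ℂ) (x : Fin 3 → ℂ) :
    g2cBracket (0, x) (A, 0) = (0, -(A *ᵥ x)) := by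
  simp [g2cBracket, crossC_eq_crossProduct]

theorem g2cBracket_mk_vec (M : Matrix (Fin 3) (Fin 3) ℂ) (c z : Fin 3 → ℂ) :
    g2cBracket (M, c) (0, z) =
      ((3 : ℂ) • (vecMulVec z (star c) - vecMulVec c (star z)) - (star c ⬝ᵥ z - star z ⬝ᵥ c) • 1,
        M *ᵥ z + (2 : ℂ) • star c ⨯₃ star z) := by
  simp [g2cBracket, crossC_eq_crossProduct]

theorem trace_g2cBracket_fst (u v : 𝔤) : (g2cBracket u v).1.trace = 0 := by
  have trace_vecMulVec_star (x y : Fin 3 → ℂ) : (vecMulVec y (star x)).trace = star x ⬝ᵥ y :=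
    dotProduct_comm _ _
  simp only [g2cBracket, trace_add, trace_sub, trace_smul, trace_mul_comm u.1 v.1,
    trace_vecMulVec_star, trace_one, Fintype.card_fin]
  push_cast
  ring

theorem conjTranspose_g2cBracket_fst {A B : Matrix (Fin 3) (Fin 3) ℂ} (hA : Aᴴ = -A)
    (hB : Bᴴ = -B) (x y : Fin 3 → ℂ) :
    (g2cBracket (A, x) (B, y)).1ᴴ = -(g2cBracket (A, x) (B, y)).1 := by
  simp only [g2cBracket]
  -- the scalar coefficient becomes `s - star s` with `s = star x ⬝ᵥ y`
  rw [star_dotProduct y x]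
  simp only [conjTranspose_add, conjTranspose_sub, conjTranspose_mul, conjTranspose_smul,
    conjTranspose_vecMulVec, conjTranspose_one, hA, hB, neg_mul_neg, star_star, star_sub,
    star_ofNat]
  module

theorem g2cBracket_mat_g2cBracket_vec_vec {A : Matrix (Fin 3) (Fin 3) ℂ} (hA : Aᴴ = -A)
    (hA₀ : A.trace = 0) (x y : Fin 3 → ℂ) :
    g2cBracket (A, 0) (g2cBracket (0, x) (0, y))
      = g2cBracket (0, A *ᵥ x) (0, y) + g2cBracket (0, x) (0, A *ᵥ y) := by
  simp only [g2cBracket_mk_vec, zero_mulVec, zero_add]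
  ext1
  · simp only [g2cBracket, star_zero, vecMulVec_zero, zero_vecMulVec, zero_dotProduct,
      dotProduct_zero, sub_self, smul_zero, zero_smul, sub_zero, Prod.fst_add]
    rw [star_mulVec_of_conjTranspose_eq_neg hA, star_mulVec_of_conjTranspose_eq_neg hA]
    simp only [vecMulVec_neg, neg_dotProduct, ← vecMulVec_mul, ← mul_vecMulVec,
      ← dotProduct_mulVec, mul_sub, sub_mul, mul_smul_comm, smul_mul_assoc, mul_one, one_mul]
    module
  · simp only [g2cBracket, crossC_eq_crossProduct, mulVec_zero, star_zero, map_zero,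
      LinearMap.zero_apply, sub_zero, smul_zero, add_zero, mulVec_smul,
      mulVec_star_cross_star hA hA₀, smul_add, Prod.snd_add]

noncomputable def g2cJacobiator (u v w : 𝔤) : 𝔤 :=
  g2cBracket (g2cBracket u v) w + g2cBracket (g2cBracket v w) u + g2cBracket (g2cBracket w u) v

theorem g2cJacobiator_cycle (u v w : 𝔤) : g2cJacobiator v w u = g2cJacobiator u v w := by
  simp only [g2cJacobiator]
  abel

theorem g2cJacobiator_add_left (u u' v w : 𝔤) :
    g2cJacobiator (u + u') v w = g2cJacobiator u v w + g2cJacobiator u' v w := by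
  simp only [g2cJacobiator, g2cBracket_add_left, g2cBracket_add_right]
  abel

theorem g2cJacobiator_add_middle (u v v' w : 𝔤) :
    g2cJacobiator u (v + v') w = g2cJacobiator u v w + g2cJacobiator u v' w := by
  rw [← g2cJacobiator_cycle u, g2cJacobiator_add_left, g2cJacobiator_cycle u,
    g2cJacobiator_cycle u]

theorem g2cJacobiator_add_right (u v w w' : 𝔤) :
    g2cJacobiator u v (w + w') = g2cJacobiator u v w + g2cJacobiator u v w' := by
  rw [g2cJacobiator_cycle (w + w'), g2cJacobiator_add_left, ← g2cJacobiator_cycle w,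
    ← g2cJacobiator_cycle w']

theorem g2cJacobiator_mat_mat_mat (A B C : Matrix (Fin 3) (Fin 3) ℂ) :
    g2cJacobiator (A, 0) (B, 0) (C, 0) = 0 := by
  simp only [g2cJacobiator, g2cBracket_mat_mat, Prod.mk_add_mk, add_zero, Prod.mk_eq_zero,
    and_true]
  noncomm_ring

theorem g2cJacobiator_mat_mat_vec (A B : Matrix (Fin 3) (Fin 3) ℂ) (z : Fin 3 → ℂ) :
    g2cJacobiator (A, 0) (B, 0) (0, z) = 0 := by
  simp only [g2cJacobiator, g2cBracket_mat_mat, g2cBracket_mat_vec, g2cBracket_vec_mat,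
    Prod.mk_add_mk, add_zero, Prod.mk_eq_zero, true_and]
  simp only [sub_mulVec, mulVec_neg, mulVec_mulVec, neg_neg]
  abel

theorem g2cJacobiator_mat_vec_vec {A : Matrix (Fin 3) (Fin 3) ℂ} (hA : Aᴴ = -A)
    (hA₀ : A.trace = 0) (x y : Fin 3 → ℂ) :
    g2cJacobiator (A, 0) (0, x) (0, y) = 0 := by
  have hyA : g2cBracket (0, y) (A, 0) = -(0, A *ᵥ y) := by
    rw [g2cBracket_swap, g2cBracket_mat_vec]
  rw [g2cJacobiator, g2cBracket_mat_vec, hyA, g2cBracket_neg_left,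
    g2cBracket_swap (0, x) (0, A *ᵥ y), g2cBracket_swap (A, 0),
    g2cBracket_mat_g2cBracket_vec_vec hA hA₀]
  abel

theorem g2cJacobiator_vec_vec_vec (x y z : Fin 3 → ℂ) :
    g2cJacobiator (0, x) (0, y) (0, z) = 0 := by
  have star_two_smul_star_cross_star (a b : Fin 3 → ℂ) :
      star ((2 : ℂ) • star a ⨯₃ star b) = (2 : ℂ) • a ⨯₃ b := by
    rw [star_smul, star_crossProduct, star_star, star_star, star_ofNat]
  simp only [g2cJacobiator, g2cBracket_mk_vec, zero_mulVec, zero_add,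
    star_two_smul_star_cross_star]
  ext1
  · simp only [vecMulVec_smul, smul_vecMulVec, smul_dotProduct, dotProduct_smul,
      cross_dotProduct, Prod.fst_add, Prod.fst_zero]
    rw [triple_product_permutation y z x, triple_product_permutation z x y,
      triple_product_permutation (star y) (star z) (star x),
      triple_product_permutation (star z) (star x) (star y)]
    linear_combination (norm := module) (6 : ℂ) • vecMulVec_cross_cyclic_sum x y z
      - (6 : ℂ) • cross_vecMulVec_cyclic_sum (star x) (star y) (star z)
  · simp only [map_smul, LinearMap.smul_apply, cross_cross_eq_smul_sub_smul, sub_mulVec,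
      smul_mulVec, vecMulVec_mulVec, op_smul_eq_smul, one_mulVec, Prod.snd_add, Prod.snd_zero]
    rw [dotProduct_comm x (star z), dotProduct_comm y (star z), dotProduct_comm y (star x),
      dotProduct_comm z (star x), dotProduct_comm z (star y), dotProduct_comm x (star y)]
    module

theorem g2cJacobiator_eq_zero {u v w : 𝔤} (hu : u.1ᴴ = -u.1) (hu₀ : u.1.trace = 0)
    (hv : v.1ᴴ = -v.1) (hv₀ : v.1.trace = 0) (hw : w.1ᴴ = -w.1) (hw₀ : w.1.trace = 0) :
    g2cJacobiator u v w = 0 := by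
  obtain ⟨A, x⟩ := u
  obtain ⟨B, y⟩ := v
  obtain ⟨C, z⟩ := w
  have mk_eq_add (M c) : ((M, c) : 𝔤) = (M, 0) + (0, c) := by simp
  rw [mk_eq_add A, mk_eq_add B, mk_eq_add C]
  simp only [g2cJacobiator_add_left, g2cJacobiator_add_middle, g2cJacobiator_add_right]
  rw [g2cJacobiator_cycle (C, 0) (A, 0) (0, y), ← g2cJacobiator_cycle (0, x) (B, 0) (C, 0),
    ← g2cJacobiator_cycle (0, x) (B, 0) (0, z), g2cJacobiator_cycle (C, 0) (0, x) (0, y)]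
  simp only [g2cJacobiator_mat_mat_mat, g2cJacobiator_mat_mat_vec, g2cJacobiator_vec_vec_vec,
    g2cJacobiator_mat_vec_vec hu hu₀, g2cJacobiator_mat_vec_vec hv hv₀,
    g2cJacobiator_mat_vec_vec hw hw₀, add_zero]

/-- The bracket of `𝔤₂ᶜ` is well defined (its first component is traceless anti-Hermitian)
and satisfies the Jacobi identity on `su(3) × ℂ³`: it makes `su(3) × ℂ³` into a real Lie
algebra, the compact real form of the exceptional Lie algebra `𝔤₂`. -/
theorem stmt_14 :
    (∀ (A₁ A₂ : Matrix (Fin 3) (Fin 3) ℂ) (v₁ v₂ : Fin 3 → ℂ),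
      A₁ᴴ = -A₁ → A₁.trace = 0 → A₂ᴴ = -A₂ → A₂.trace = 0 →
      (g2cBracket (A₁, v₁) (A₂, v₂)).1ᴴ = -(g2cBracket (A₁, v₁) (A₂, v₂)).1
        ∧ (g2cBracket (A₁, v₁) (A₂, v₂)).1.trace = 0)
    ∧ (∀ u v w : Matrix (Fin 3) (Fin 3) ℂ × (Fin 3 → ℂ),
        u.1ᴴ = -u.1 → u.1.trace = 0 → v.1ᴴ = -v.1 → v.1.trace = 0 →
        w.1ᴴ = -w.1 → w.1.trace = 0 →
        g2cBracket (g2cBracket u v) w + g2cBracket (g2cBracket v w) u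
          + g2cBracket (g2cBracket w u) v = 0) := by
  constructor
  · intro A₁ A₂ v₁ v₂ hA₁ _ hA₂ _
    exact ⟨conjTranspose_g2cBracket_fst hA₁ hA₂ v₁ v₂, trace_g2cBracket_fst _ _⟩
  · intro u v w hu hu₀ hv hv₀ hw hw₀
    exact g2cJacobiator_eq_zero hu hu₀ hv hv₀ hw hw₀
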